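/- arXiv:2103.09961 — 4 statements merged into one kernel-verified Lean document; each statement's English description precedes it below -/
import Mathlib

section
/- Let T be a bounded operator on a complex Hilbert space such that the sequence ((T*ʲTʲ)^{1/j})_{j≥1} is monotonically increasing (this holds in particular when T is of class A), and let n be an integer ≥ 2. If Tⁿ is quasinormal, then T is quasinormal. -/
/-!
Put `Q = (T*ⁿTⁿ)^{1/n}`. Since `Tⁿ` is quasinormal, `(T*ⁿᵏTⁿᵏ)^{1/nk} = Q` for every `k ≥ 1`,
so monotonicity forces `(T*ʲTʲ)^{1/j} = Q` for all `j ≥ n`; hence `T*QʲT = Q^{j+1}` for `j ≥ n`,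
and `T*T ≤ Q`. For `Z = QᵐT - TQᵐ` these relations give `Z*Z + Qᵐ(Q - T*T)Qᵐ = 0`, a sum of
positive terms, so `(Q - T*T)Qᵐ = 0` and then `(Q - T*T)Q = 0`. A positive `P ≤ Q` with
`PQ = 0` vanishes (`P³ ≤ PQP = 0`), so `T*T = Q`. Monotonicity now gives `(T*ʲTʲ)^{1/j} = Q`
for every `j ≥ 1`, and the same identity with `m = 1` shows that `T` commutes with `Q = T*T`.
-/

open ContinuousLinearMap in
/-- `(T*ʲ Tʲ)^(1/j)` via the continuous functional calculus. -/
noncomputable def rootpow {H : Type*} [NormedAddCommGroup H] [InnerProductSpace ℂ H]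
    [CompleteSpace H] (T : H →L[ℂ] H) (j : ℕ) : H →L[ℂ] H :=
  cfc (fun x : ℝ => x ^ ((j : ℝ)⁻¹)) (adjoint (T ^ j) * T ^ j)

section StarRing

variable {R : Type*} [Ring R] [StarRing R]

theorem star_pow_mul_pow_of_commute {a : R} (h : Commute a (star a * a)) (k : ℕ) :
    star (a ^ k) * a ^ k = (star a * a) ^ k := by
  induction k with
  | zero => simp
  | succ k ih =>
    rw [pow_succ' a k, star_mul, mul_assoc, ← mul_assoc (star a), ← (h.pow_left k).eq,
      ← mul_assoc, ih, ← pow_succ]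

theorem star_pow_succ_mul_pow_succ (a : R) (j : ℕ) :
    star (a ^ (j + 1)) * a ^ (j + 1) = star a * (star (a ^ j) * a ^ j) * a := by
  rw [pow_succ, star_mul]
  noncomm_ring

theorem star_commutator_mul_self_add {t q : R} (hq : IsSelfAdjoint q) {m : ℕ}
    (h₁ : star t * q ^ m * t = q ^ (m + 1))
    (h₂ : star t * q ^ (2 * m) * t = q ^ (2 * m + 1)) :
    star (q ^ m * t - t * q ^ m) * (q ^ m * t - t * q ^ m) + q ^ m * (q - star t * t) * q ^ m
      = 0 := by
  have e₁ : q ^ (m + 1) = q ^ m * q := pow_succ q m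
  have e₂ : q ^ (2 * m) = q ^ m * q ^ m := by rw [two_mul, pow_add]
  have e₃ : q ^ (2 * m + 1) = q ^ m * q * q ^ m := by
    rw [mul_assoc, ← pow_succ', ← pow_add]
    congr 1
    omega
  rw [e₂, e₃] at h₂
  rw [e₁] at h₁
  simp only [star_sub, star_mul, (hq.pow m).star_eq]
  have hc : q * q ^ m = q ^ m * q := (Commute.self_pow q m).eq
  generalize q ^ m = p at h₁ h₂ hc ⊢
  calc _ = star t * (p * p) * t - star t * p * t * p - p * (star t * p * t) + p * q * p := by
        noncomm_ring
    _ = 0 := by rw [h₁, h₂, mul_assoc p q p, hc]; noncomm_ring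

end StarRing

section CStarRing

variable {R : Type*} [NormedRing R] [StarRing R] [CStarRing R]

theorem mul_eq_zero_of_mul_pow_eq_zero {a b : R} (hb : IsSelfAdjoint b) {m : ℕ} (hm : m ≠ 0)
    (h : a * b ^ m = 0) : a * b = 0 := by
  obtain ⟨k, rfl⟩ := Nat.exists_eq_succ_of_ne_zero hm
  induction k with
  | zero => simpa using h
  | succ k ih =>
    refine ih k.succ_ne_zero ((CStarRing.mul_star_self_eq_zero_iff _).mp ?_)
    calc a * b ^ (k + 1) * star (a * b ^ (k + 1))
        = a * b ^ (k + 1 + 1) * (b ^ k * star a) := by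
          rw [star_mul, (hb.pow _).star_eq, pow_succ _ (k + 1), pow_succ' _ k]
          noncomm_ring
      _ = 0 := by rw [h, zero_mul]

theorem commute_of_star_mul_self_eq {t q : R} (hq : IsSelfAdjoint q) (h₀ : star t * t = q)
    (h₁ : star t * q * t = q ^ 2) (h₂ : star t * q ^ 2 * t = q ^ 3) : Commute t q := by
  have hsum := star_commutator_mul_self_add (m := 1) hq (by simpa using h₁) (by simpa using h₂)
  rw [h₀, sub_self, mul_zero, zero_mul, add_zero, CStarRing.star_mul_self_eq_zero_iff,
    sub_eq_zero, pow_one] at hsum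
  exact hsum.symm

end CStarRing

section CStarAlgebra

variable {A : Type*} [CStarAlgebra A] [PartialOrder A] [StarOrderedRing A]

theorem mul_eq_zero_of_star_mul_mul_eq_zero {p c : A} (hp : 0 ≤ p) (h : star c * p * c = 0) :
    p * c = 0 := by
  obtain ⟨s, rfl⟩ := CStarAlgebra.nonneg_iff_eq_star_mul_self.mp hp
  have hsc : s * c = 0 :=
    (CStarRing.star_mul_self_eq_zero_iff _).mp (by rw [star_mul, ← h]; noncomm_ring)
  rw [mul_assoc, hsc, mul_zero]

theorem eq_zero_of_le_of_mul_eq_zero {p q : A} (hp : 0 ≤ p) (hpq : p ≤ q) (h : p * q = 0) :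
    p = 0 := by
  have hsa : IsSelfAdjoint p := .of_nonneg hp
  have hcube : p * p * p = 0 := by
    refine le_antisymm ?_ (hsa.conjugate_nonneg hp)
    simpa only [hsa.star_eq, h, zero_mul] using star_left_conjugate_le_conjugate hpq p
  have hsq : p * p = 0 := by
    rw [← CStarRing.star_mul_self_eq_zero_iff, star_mul, hsa.star_eq, ← mul_assoc, hcube, zero_mul]
  rwa [← CStarRing.star_mul_self_eq_zero_iff, hsa.star_eq]

theorem star_mul_self_eq_of_le_of_conj_pow_eq {t q : A} (hq : IsSelfAdjoint q)
    (hle : star t * t ≤ q) {m : ℕ} (hm : m ≠ 0) (h₁ : star t * q ^ m * t = q ^ (m + 1))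
    (h₂ : star t * q ^ (2 * m) * t = q ^ (2 * m + 1)) : star t * t = q := by
  have hp : 0 ≤ q - star t * t := sub_nonneg.mpr hle
  have hconj : q ^ m * (q - star t * t) * q ^ m = 0 :=
    ((add_eq_zero_iff_of_nonneg (star_mul_self_nonneg _) ((hq.pow m).conjugate_nonneg hp)).mp
      (star_commutator_mul_self_add hq h₁ h₂)).2
  have hpq : (q - star t * t) * q = 0 := mul_eq_zero_of_mul_pow_eq_zero hq hm
    (mul_eq_zero_of_star_mul_mul_eq_zero hp (by rwa [(hq.pow m).star_eq]))
  exact (sub_eq_zero.mp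
    (eq_zero_of_le_of_mul_eq_zero hp (sub_le_self _ (star_mul_self_nonneg t)) hpq)).symm

end CStarAlgebra

section rootpow

open ContinuousLinearMap

variable {H : Type*} [NormedAddCommGroup H] [InnerProductSpace ℂ H] [CompleteSpace H]

theorem adjoint_mul_self_nonneg (S : H →L[ℂ] H) : 0 ≤ adjoint S * S := by
  simpa only [star_eq_adjoint] using star_mul_self_nonneg S

theorem rootpow_eq_rpow (T : H →L[ℂ] H) (j : ℕ) :
    rootpow T j = (adjoint (T ^ j) * T ^ j) ^ ((j : ℝ)⁻¹) :=
  (CFC.rpow_eq_cfc_real (adjoint_mul_self_nonneg _)).symm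

theorem rootpow_nonneg (T : H →L[ℂ] H) (j : ℕ) : 0 ≤ rootpow T j := by
  rw [rootpow_eq_rpow]
  exact CFC.rpow_nonneg

theorem rootpow_pow (T : H →L[ℂ] H) {j : ℕ} (hj : j ≠ 0) :
    rootpow T j ^ j = adjoint (T ^ j) * T ^ j := by
  have h := adjoint_mul_self_nonneg (T ^ j)
  rw [rootpow_eq_rpow, ← CFC.rpow_natCast _ _ CFC.rpow_nonneg,
    CFC.rpow_rpow_of_exponent_nonneg _ _ _ (by positivity) (by positivity) h,
    inv_mul_cancel₀ (by exact_mod_cast hj), CFC.rpow_one _ h]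

theorem rootpow_one (T : H →L[ℂ] H) : rootpow T 1 = adjoint T * T := by
  simpa using rootpow_pow T one_ne_zero

theorem rootpow_mul_of_commute (T : H →L[ℂ] H) {n k : ℕ}
    (hq : Commute (T ^ n) (adjoint (T ^ n) * T ^ n)) (hk : k ≠ 0) :
    rootpow T (n * k) = rootpow T n := by
  have hE : adjoint (T ^ (n * k)) * T ^ (n * k) = (adjoint (T ^ n) * T ^ n) ^ k := by
    rw [pow_mul, ← star_eq_adjoint, ← star_eq_adjoint]
    exact star_pow_mul_pow_of_commute (by rwa [star_eq_adjoint]) k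
  have h := adjoint_mul_self_nonneg (T ^ n)
  rw [rootpow_eq_rpow, rootpow_eq_rpow, hE, ← CFC.rpow_natCast _ _ h,
    CFC.rpow_rpow_of_exponent_nonneg _ _ _ (by positivity) (by positivity) h]
  congr 1
  push_cast
  field_simp

variable {T : H →L[ℂ] H} (hmono : ∀ j : ℕ, 1 ≤ j → rootpow T j ≤ rootpow T (j + 1))
include hmono

theorem rootpow_le_rootpow {i j : ℕ} (hi : 1 ≤ i) (hij : i ≤ j) : rootpow T i ≤ rootpow T j :=
  Nat.rel_of_forall_rel_succ_of_le_of_le (· ≤ ·) hmono hi hij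

theorem rootpow_eq_of_le {n : ℕ} (hn : n ≠ 0) (hq : Commute (T ^ n) (adjoint (T ^ n) * T ^ n))
    {i j : ℕ} (hi : 1 ≤ i) (hin : rootpow T i = rootpow T n) (hij : i ≤ j) :
    rootpow T j = rootpow T n := by
  refine le_antisymm ?_ (hin ▸ rootpow_le_rootpow hmono hi hij)
  calc rootpow T j ≤ rootpow T (n * j) :=
        rootpow_le_rootpow hmono (hi.trans hij) (Nat.le_mul_of_pos_left j (Nat.pos_of_ne_zero hn))
    _ = rootpow T n := rootpow_mul_of_commute T hq (by omega)

end rootpow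

open ContinuousLinearMap in
theorem stmt_8 {H : Type*} [NormedAddCommGroup H] [InnerProductSpace ℂ H] [CompleteSpace H] (T : H →L[ℂ] H)
    (hmono : ∀ j : ℕ, 1 ≤ j → rootpow T j ≤ rootpow T (j + 1))
    (n : ℕ) (hn : 2 ≤ n)
    (hq : T ^ n * (adjoint (T ^ n) * T ^ n) = (adjoint (T ^ n) * T ^ n) * T ^ n) :
    T * (adjoint T * T) = (adjoint T * T) * T := by
  have hn₀ : n ≠ 0 := by omega
  set Q := rootpow T n
  have hQ : IsSelfAdjoint Q := .of_nonneg (rootpow_nonneg T n)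
  have hconj : ∀ i, 1 ≤ i → rootpow T i = Q → ∀ j, i ≤ j → star T * Q ^ j * T = Q ^ (j + 1) := by
    intro i hi hiQ j hij
    have hpow : ∀ k, i ≤ k → star (T ^ k) * T ^ k = Q ^ k := fun k hik => by
      rw [star_eq_adjoint, ← rootpow_pow T (by omega), rootpow_eq_of_le hmono hn₀ hq hi hiQ hik]
    rw [← hpow j hij, ← hpow (j + 1) (by omega), star_pow_succ_mul_pow_succ]
  have hT : star T * T = Q := by
    refine star_mul_self_eq_of_le_of_conj_pow_eq hQ ?_ hn₀ (hconj n (by omega) rfl n le_rfl)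
      (hconj n (by omega) rfl (2 * n) (by omega))
    rw [star_eq_adjoint, ← rootpow_one]
    exact rootpow_le_rootpow hmono le_rfl (by omega)
  have h₁ : rootpow T 1 = Q := by rw [rootpow_one, ← star_eq_adjoint, hT]
  rw [← star_eq_adjoint, hT]
  exact commute_of_star_mul_self_eq hQ hT (by simpa using hconj 1 le_rfl h₁ 1 le_rfl)
    (hconj 1 le_rfl h₁ 2 (by omega))
end

section
/- Let T be a bounded operator on a complex Hilbert space H such that T*ᵏTᵏ = (T*T)ᵏ for all nonnegative integers k. Then T is quasinormal, i.e., T(T*T) = (T*T)T. -/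
/-!
Write `A = T⋆T` and `D = TA - AT`. Expanding `D⋆D` leaves the words `A³`, `A(T⋆AT)`, `(T⋆AT)A`
and `T⋆A²T`; the hypothesis for `k = 2, 3` rewrites `T⋆AT = A²` and `T⋆A²T = A³`, so `D⋆D = 0`,
and the C⋆-identity `‖D⋆D‖ = ‖D‖²` forces `D = 0`.
-/

theorem star_mul_self_commutator_star_mul_self_eq_zero {R : Type*} [Ring R] [StarRing R] (a : R)
    (h₂ : star a ^ 2 * a ^ 2 = (star a * a) ^ 2) (h₃ : star a ^ 3 * a ^ 3 = (star a * a) ^ 3) :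
    star (a * (star a * a) - star a * a * a) * (a * (star a * a) - star a * a * a) = 0 := by
  have hA₂ : star a * (star a * a) * a = (star a * a) ^ 2 := by rw [← h₂]; noncomm_ring
  have hA₃ : star a * (star a * a) ^ 2 * a = (star a * a) ^ 3 := by
    rw [← h₂, ← h₃]; noncomm_ring
  calc star (a * (star a * a) - star a * a * a) * (a * (star a * a) - star a * a * a)
      = (star a * a) ^ 3 - star a * a * (star a * (star a * a) * a)
          - star a * (star a * a) * a * (star a * a) + star a * (star a * a) ^ 2 * a := by
        simp only [star_sub, star_mul, star_star]; noncomm_ring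
    _ = 0 := by rw [hA₂, hA₃]; noncomm_ring

theorem commute_star_mul_self_of_star_pow_mul_pow {R : Type*} [NormedRing R] [StarRing R]
    [CStarRing R] (a : R) (h₂ : star a ^ 2 * a ^ 2 = (star a * a) ^ 2)
    (h₃ : star a ^ 3 * a ^ 3 = (star a * a) ^ 3) : Commute a (star a * a) :=
  sub_eq_zero.mp <| CStarRing.star_mul_self_eq_zero_iff _ |>.mp <|
    star_mul_self_commutator_star_mul_self_eq_zero a h₂ h₃

open ContinuousLinearMap in
theorem stmt_11 {H : Type*} [NormedAddCommGroup H] [InnerProductSpace ℂ H] [CompleteSpace H] (T : H →L[ℂ] H)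
    (h : ∀ k : ℕ, (adjoint T) ^ k * T ^ k = (adjoint T * T) ^ k) :
    T * (adjoint T * T) = (adjoint T * T) * T := by
  simp only [← star_eq_adjoint] at h ⊢
  exact commute_star_mul_self_of_star_pow_mul_pow T (h 2) (h 3)
end

section
/- For every integer n ≥ 2, there exists a bounded sequence λ = (λₖ)ₖ≥0 of positive real numbers and the associated unilateral weighted shift W on ℓ² such that Wⁿ = Uⁿ (U the unweighted unilateral shift) but W is not quasinormal. -/
/-
Take the weights `2, ½, 1, …, 1` repeated with period `n`. Any `n` consecutive weights multiply
to `1`, and `Wⁿ eₖ = (λₖ ⋯ λₖ₊ₙ₋₁) eₖ₊ₙ`, so `Wⁿ` and `Uⁿ` agree on the basis, hence are equal.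
On the other hand `W*W eₖ = |λₖ|² eₖ`, so comparing `W (W*W) eₖ` with `(W*W) W eₖ` shows that
quasinormality forces `|λₖ| = |λₖ₊₁|`, which fails at `k = 0`.
-/

open scoped ENNReal NNReal lp
open Finset

namespace lp

section RightShift

variable {𝕜 E : Type*} [NormedField 𝕜] [NormedAddCommGroup E] [NormedSpace 𝕜 E] {p : ℝ≥0∞}

def rightShiftSeq (x : ℕ → E) : ℕ → E
  | 0 => 0
  | k + 1 => x k

theorem rightShiftSeq_add (x y : ℕ → E) :
    rightShiftSeq (x + y) = rightShiftSeq x + rightShiftSeq y := by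
  ext (_ | k) <;> simp [rightShiftSeq]

theorem rightShiftSeq_smul (c : 𝕜) (x : ℕ → E) :
    rightShiftSeq (c • x) = c • rightShiftSeq x := by
  ext (_ | k) <;> simp [rightShiftSeq]

theorem memℓp_rightShiftSeq (hp : 0 < p.toReal) {x : ℕ → E} (hx : Memℓp x p) :
    Memℓp (rightShiftSeq x) p := by
  rw [memℓp_gen_iff hp] at hx ⊢
  exact (summable_nat_add_iff 1).mp hx

theorem tsum_rightShiftSeq_rpow (hp : 0 < p.toReal) {x : ℕ → E} (hx : Memℓp x p) :
    ∑' k, ‖rightShiftSeq x k‖ ^ p.toReal = ∑' k, ‖x k‖ ^ p.toReal := by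
  rw [((memℓp_rightShiftSeq hp hx).summable hp).tsum_eq_zero_add]
  simp [rightShiftSeq, Real.zero_rpow hp.ne']

variable [Fact (1 ≤ p)]

noncomputable def rightShift (hp : p ≠ ∞) : ℓ^p(ℕ, E) →L[𝕜] ℓ^p(ℕ, E) :=
  have hp' : 0 < p.toReal := ENNReal.toReal_pos (zero_lt_one.trans_le Fact.out).ne' hp
  LinearMap.mkContinuous
    { toFun x := ⟨rightShiftSeq x, memℓp_rightShiftSeq hp' (lp.memℓp x)⟩
      map_add' x y := lp.ext (rightShiftSeq_add x y)
      map_smul' c x := lp.ext (rightShiftSeq_smul c x) }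
    1 fun x => by
      rw [one_mul]
      refine lp.norm_le_of_tsum_le hp' (norm_nonneg _) ?_
      rw [lp.norm_rpow_eq_tsum hp']
      exact (tsum_rightShiftSeq_rpow hp' (lp.memℓp x)).le

theorem rightShift_single (hp : p ≠ ∞) (k : ℕ) (a : E) :
    rightShift (𝕜 := 𝕜) hp (lp.single p k a) = lp.single p (k + 1) a := by
  ext (_ | j)
  · simp [rightShift, rightShiftSeq]
  · simp [rightShift, rightShiftSeq, Pi.single_apply]

end RightShift

theorem ext_continuousLinearMap_single_one {ι 𝕜 F : Type*} [NormedField 𝕜] [DecidableEq ι]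
    [AddCommMonoid F] [Module 𝕜 F] [TopologicalSpace F] [T2Space F]
    {p : ℝ≥0∞} [Fact (1 ≤ p)] (hp : p ≠ ∞) {T S : ℓ^p(ι, 𝕜) →L[𝕜] F}
    (h : ∀ i, T (lp.single p i 1) = S (lp.single p i 1)) : T = S := by
  refine lp.ext_continuousLinearMap hp fun i => ?_
  ext
  simpa using h i

theorem mapCLM_single {ι 𝕜 : Type*} [NontriviallyNormedField 𝕜] [DecidableEq ι]
    {E F : ι → Type*} [∀ i, NormedAddCommGroup (E i)] [∀ i, NormedSpace 𝕜 (E i)]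
    [∀ i, NormedAddCommGroup (F i)] [∀ i, NormedSpace 𝕜 (F i)] {p : ℝ≥0∞} [Fact (1 ≤ p)]
    (T : ∀ i, E i →L[𝕜] F i) {K : ℝ} (hK : 0 ≤ K) (hTK : ∀ i, ‖T i‖ ≤ K) (i : ι) (a : E i) :
    mapCLM p T hK hTK (lp.single p i a) = lp.single p i (T i a) := by
  ext j
  by_cases hj : j = i
  · subst hj; simp
  · simp [hj]

end lp

section WeightedShift

variable {𝕜 : Type*} [NontriviallyNormedField 𝕜] {p : ℝ≥0∞} [Fact (1 ≤ p)]

def IsWeightedShift (T : ℓ^p(ℕ, 𝕜) →L[𝕜] ℓ^p(ℕ, 𝕜)) (w : ℕ → 𝕜) : Prop :=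
  ∀ k, T (lp.single p k 1) = w k • lp.single p (k + 1) 1

namespace IsWeightedShift

variable {T S : ℓ^p(ℕ, 𝕜) →L[𝕜] ℓ^p(ℕ, 𝕜)} {w v : ℕ → 𝕜}

theorem pow_single (hT : IsWeightedShift T w) (m k : ℕ) :
    (T ^ m) (lp.single p k 1) = (∏ i ∈ range m, w (k + i)) • lp.single p (k + m) 1 := by
  induction m with
  | zero => simp
  | succ m ih =>
    rw [pow_succ', mul_apply_eq_comp, ih, map_smul, hT, smul_smul, prod_range_succ, add_assoc]

theorem pow_eq_pow (hp : p ≠ ∞) (hT : IsWeightedShift T w) (hS : IsWeightedShift S v) {m : ℕ}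
    (h : ∀ k, ∏ i ∈ range m, w (k + i) = ∏ i ∈ range m, v (k + i)) : T ^ m = S ^ m :=
  lp.ext_continuousLinearMap_single_one hp fun k => by rw [hT.pow_single, hS.pow_single, h]

end IsWeightedShift

noncomputable def weightedShift (hp : p ≠ ∞) (w : ℕ → 𝕜) {C : ℝ≥0} (hw : ∀ k, ‖w k‖ ≤ C) :
    ℓ^p(ℕ, 𝕜) →L[𝕜] ℓ^p(ℕ, 𝕜) :=
  lp.rightShift hp ∘L
    lp.mapCLM p (fun k => w k • ContinuousLinearMap.id 𝕜 𝕜) C.2 fun k =>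
      (norm_smul_le _ _).trans <|
        (mul_le_of_le_one_right (norm_nonneg _) ContinuousLinearMap.norm_id_le).trans (hw k)

theorem isWeightedShift_weightedShift (hp : p ≠ ∞) (w : ℕ → 𝕜) {C : ℝ≥0}
    (hw : ∀ k, ‖w k‖ ≤ C) : IsWeightedShift (weightedShift hp w hw) w := fun k => by
  rw [weightedShift, ContinuousLinearMap.comp_apply, lp.mapCLM_single, lp.rightShift_single,
    smul_apply, ContinuousLinearMap.id_apply, ← lp.single_smul, smul_eq_mul, mul_one]

end WeightedShift

section Adjoint

variable {𝕜 : Type*} [RCLike 𝕜] {T : ℓ^2(ℕ, 𝕜) →L[𝕜] ℓ^2(ℕ, 𝕜)} {w : ℕ → 𝕜}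

open ContinuousLinearMap ComplexConjugate

namespace IsWeightedShift

theorem adjoint_single_succ (hT : IsWeightedShift T w) (k : ℕ) :
    adjoint T (lp.single 2 (k + 1) 1) = conj (w k) • lp.single 2 k 1 := by
  have coord (x : ℓ^2(ℕ, 𝕜)) (j : ℕ) : x j = inner 𝕜 (lp.single 2 j 1) x := by
    simp [lp.inner_single_left]
  ext j
  rw [coord, adjoint_inner_right, hT, inner_smul_left, lp.inner_single_left]
  by_cases hj : j = k
  · subst hj; simp
  · simp [hj]

theorem adjoint_mul_self_single (hT : IsWeightedShift T w) (k : ℕ) :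
    (adjoint T * T) (lp.single 2 k 1) = (conj (w k) * w k) • lp.single 2 k 1 := by
  rw [mul_apply_eq_comp, hT, map_smul, hT.adjoint_single_succ, smul_smul, mul_comm]

theorem norm_eq_norm_succ_of_commute (hT : IsWeightedShift T w) (hc : Commute T (adjoint T * T))
    {k : ℕ} (hk : w k ≠ 0) : ‖w k‖ = ‖w (k + 1)‖ := by
  have h : (T * (adjoint T * T)) (lp.single 2 k 1) = (adjoint T * T * T) (lp.single 2 k 1) := by
    rw [hc.eq]
  rw [mul_apply_eq_comp, hT.adjoint_mul_self_single, map_smul, hT, mul_apply_eq_comp, hT, map_smul,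
    hT.adjoint_mul_self_single, smul_smul, smul_smul] at h
  replace h := congr($h (k + 1))
  simp only [lp.coeFn_smul, Pi.smul_apply, lp.single_apply_self, smul_eq_mul, mul_one] at h
  rw [RCLike.conj_mul, RCLike.conj_mul, mul_comm, mul_right_inj' hk] at h
  exact (pow_left_inj₀ (norm_nonneg _) (norm_nonneg _) two_ne_zero).mp (mod_cast h)

end IsWeightedShift

end Adjoint

theorem Function.Periodic.prod_range_add {M : Type*} [CommMonoid M] {g : ℕ → M} {n : ℕ}
    (hg : Function.Periodic g n) (k : ℕ) : ∏ i ∈ range n, g (k + i) = ∏ i ∈ range n, g i := by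
  induction k with
  | zero => simp
  | succ k ih =>
    rw [← ih]
    cases n with
    | zero => simp
    | succ m =>
      rw [prod_range_succ, prod_range_succ', add_zero, show k + 1 + m = k + (m + 1) by omega, hg]
      congr 1
      exact prod_congr rfl fun i _ => by rw [add_assoc, add_comm 1]

noncomputable def baseWeight : ℕ → ℝ
  | 0 => 2
  | 1 => 2⁻¹
  | _ + 2 => 1

noncomputable def periodicWeight (n k : ℕ) : ℝ := baseWeight (k % n)

theorem periodicWeight_pos (n k : ℕ) : 0 < periodicWeight n k := by
  rw [periodicWeight]
  rcases k % n with _ | _ | i <;> norm_num [baseWeight]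

theorem periodicWeight_le_two (n k : ℕ) : periodicWeight n k ≤ 2 := by
  rw [periodicWeight]
  rcases k % n with _ | _ | i <;> norm_num [baseWeight]

theorem periodicWeight_periodic (n : ℕ) : Function.Periodic (periodicWeight n) n := fun k => by
  simp [periodicWeight]

theorem prod_range_periodicWeight {n : ℕ} (hn : 2 ≤ n) (k : ℕ) :
    ∏ i ∈ range n, periodicWeight n (k + i) = 1 := by
  rw [(periodicWeight_periodic n).prod_range_add]
  obtain ⟨m, rfl⟩ := Nat.exists_eq_add_of_le' hn
  rw [prod_range_succ', prod_range_succ']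
  have : ∀ i ∈ range m, periodicWeight (m + 2) (i + 1 + 1) = 1 := fun i hi => by
    rw [periodicWeight, Nat.mod_eq_of_lt (by simpa using hi)]
    rfl
  rw [prod_eq_one this]
  simp [periodicWeight, baseWeight]

theorem periodicWeight_zero (n : ℕ) : periodicWeight n 0 = 2 := by
  simp [periodicWeight, baseWeight]

theorem periodicWeight_one {n : ℕ} (hn : 2 ≤ n) : periodicWeight n 1 = 2⁻¹ := by
  rw [periodicWeight, Nat.mod_eq_of_lt hn]
  rfl

open ContinuousLinearMap in
theorem stmt_14 (n : ℕ) (hn : 2 ≤ n) :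
    ∃ (lam : ℕ → ℝ) (W U : lp (fun _ : ℕ => ℂ) 2 →L[ℂ] lp (fun _ : ℕ => ℂ) 2),
      (∀ k, 0 < lam k) ∧ (∃ M, ∀ k, lam k ≤ M) ∧
      (∀ k : ℕ, W (lp.single 2 k (1 : ℂ)) = (lam k : ℂ) • lp.single 2 (k + 1) (1 : ℂ)) ∧
      (∀ k : ℕ, U (lp.single 2 k (1 : ℂ)) = lp.single 2 (k + 1) (1 : ℂ)) ∧
      W ^ n = U ^ n ∧
      ¬ (W * (adjoint W * W) = (adjoint W * W) * W) := by
  have hp : (2 : ℝ≥0∞) ≠ ∞ := ENNReal.ofNat_ne_top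
  have hw : ∀ k, ‖(periodicWeight n k : ℂ)‖ ≤ (2 : ℝ≥0) := fun k => by
    simpa [abs_of_pos (periodicWeight_pos n k)] using periodicWeight_le_two n k
  have hW := isWeightedShift_weightedShift hp _ hw
  have hU := isWeightedShift_weightedShift hp (fun _ => (1 : ℂ)) (C := 1) (by simp)
  refine ⟨periodicWeight n, _, _, periodicWeight_pos n, ⟨2, periodicWeight_le_two n⟩, hW,
    fun k => by simpa using hU k, hW.pow_eq_pow hp hU fun k => ?_, fun hc => ?_⟩
  · simp [← Complex.ofReal_prod, prod_range_periodicWeight hn]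
  · have := hW.norm_eq_norm_succ_of_commute hc (k := 0) (by simp [(periodicWeight_pos n 0).ne'])
    norm_num [periodicWeight_zero, periodicWeight_one hn] at this
end

section
/- Let T be a bounded quasinormal operator on a complex Hilbert space H, and suppose T is an n-th root of a normal operator, i.e., Tⁿ is normal for some positive integer n. Then T is normal. -/
/-!
Write `P = T*T` and `D = T*T - TT*` for the self-commutator. Quasinormality says that `T`
commutes with `P`, which gives `DT = 0` and then `D² = DP`, so `D^(k+1) = D P^k`; it also gives
`T*^k T^k = P^k`. If `Tⁿ` is normal then `P^n = T*^n T^n = T^n T*^n`, hence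
`D^(n+1) = D T^n T*^n = 0`. A nilpotent self-adjoint element of a C*-algebra vanishes, since
`‖D^(2^k)‖ = ‖D‖^(2^k)`; so `D = 0`.
-/

def IsQuasinormal {R : Type*} [Mul R] [Star R] (a : R) : Prop :=
  Commute a (star a * a)

theorem IsSelfAdjoint.eq_zero_of_isNilpotent {E : Type*} [NormedRing E] [StarRing E]
    [CStarRing E] {x : E} (hx : IsSelfAdjoint x) (hnil : IsNilpotent x) : x = 0 := by
  obtain ⟨m, hm⟩ := hnil
  have hpow : x ^ 2 ^ m = 0 := pow_eq_zero_of_le (Nat.lt_two_pow_self).le hm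
  have hnorm : ‖x‖₊ ^ 2 ^ m = 0 := by rw [← hx.nnnorm_pow_two_pow, hpow, nnnorm_zero]
  exact nnnorm_eq_zero.mp (pow_eq_zero_iff (pow_ne_zero m two_ne_zero) |>.mp hnorm)

namespace IsQuasinormal

variable {R : Type*} [Ring R] [StarRing R] {a : R}

theorem star_commute (ha : IsQuasinormal a) : Commute (star a) (star a * a) := by
  simpa [star_mul] using ha.star_star

theorem star_pow_mul_pow (ha : IsQuasinormal a) (k : ℕ) : star a ^ k * a ^ k = (star a * a) ^ k := by
  induction k with
  | zero => simp
  | succ k ih =>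
    calc star a ^ (k + 1) * a ^ (k + 1) = star a * (star a ^ k * a ^ k) * a := by
          rw [pow_succ', pow_succ]; noncomm_ring
      _ = (star a * a) ^ k * star a * a := by rw [ih, (ha.star_commute.pow_right k).eq]
      _ = (star a * a) ^ (k + 1) := by rw [pow_succ, mul_assoc]

theorem selfCommutator_mul_self (ha : IsQuasinormal a) :
    (star a * a - a * star a) * a = 0 := by
  rw [sub_mul, mul_assoc a, ← ha.eq, sub_self]

theorem selfCommutator_pow_succ (ha : IsQuasinormal a) (k : ℕ) :
    (star a * a - a * star a) ^ (k + 1) = (star a * a - a * star a) * (star a * a) ^ k := by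
  set D := star a * a - a * star a
  have hDsq : D * D = D * (star a * a) := by
    rw [mul_sub D, ← mul_assoc D a, ha.selfCommutator_mul_self, zero_mul, sub_zero]
  induction k with
  | zero => simp
  | succ k ih => rw [pow_succ', ih, ← mul_assoc, hDsq, mul_assoc, ← pow_succ']

theorem isNilpotent_selfCommutator_of_isStarNormal_pow (ha : IsQuasinormal a) {n : ℕ}
    (hn : 0 < n) (hnormal : IsStarNormal (a ^ n)) : IsNilpotent (star a * a - a * star a) := by
  refine ⟨n + 1, ?_⟩
  obtain ⟨m, rfl⟩ := Nat.exists_eq_add_of_lt hn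
  rw [ha.selfCommutator_pow_succ, ← ha.star_pow_mul_pow, ← star_pow, hnormal.star_comm_self.eq,
    zero_add, pow_succ' a, ← mul_assoc, ← mul_assoc, ha.selfCommutator_mul_self, zero_mul,
    zero_mul]

end IsQuasinormal

theorem IsQuasinormal.isStarNormal_of_isStarNormal_pow {E : Type*} [NormedRing E] [StarRing E]
    [CStarRing E] {a : E} (ha : IsQuasinormal a) {n : ℕ} (hn : 0 < n)
    (hnormal : IsStarNormal (a ^ n)) : IsStarNormal a := by
  have hD : IsSelfAdjoint (star a * a - a * star a) :=
    (IsSelfAdjoint.star_mul_self a).sub (IsSelfAdjoint.mul_star_self a)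
  exact ⟨sub_eq_zero.mp <|
    hD.eq_zero_of_isNilpotent (ha.isNilpotent_selfCommutator_of_isStarNormal_pow hn hnormal)⟩

open ContinuousLinearMap in
theorem stmt_19 {H : Type*} [NormedAddCommGroup H] [InnerProductSpace ℂ H] [CompleteSpace H] (T : H →L[ℂ] H)
    (hq : T * (adjoint T * T) = (adjoint T * T) * T)
    (n : ℕ) (hn : 0 < n)
    (hnormal : adjoint (T ^ n) * T ^ n = T ^ n * adjoint (T ^ n)) :
    adjoint T * T = T * adjoint T := by
  simp only [← star_eq_adjoint] at hq hnormal ⊢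
  exact (IsQuasinormal.isStarNormal_of_isStarNormal_pow hq hn ⟨hnormal⟩).star_comm_self
end
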